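/- arXiv:1702.07922 — 3 statements merged into one kernel-verified Lean document; each statement's English description precedes it below -/
import Mathlib

section
/- For every n ≥ 1, consider the word equation x_n a x_n b x_{n−1} b x_{n−2} ⋯ b x_1 = a x_n x_{n−1}² b x_{n−2}² b ⋯ b x_1² b a² over the constant alphabet {a,b} with distinct variables x_1,…,x_n. Its unique solution is the substitution h with h(x_i) = a^{2^i} for all 1 ≤ i ≤ n; consequently there exist constants c_1, c_2 > 0 (independent of n) such that the length of the minimal solution of this equation is at least c_1·2^n and at most c_2·2^n for all n ≥ 1. -/
/-!
STATEMENT 0: the regular-ordered-like equation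
  x_n a x_n b x_{n-1} b x_{n-2} ⋯ b x_1 = a x_n x_{n-1}² b x_{n-2}² b ⋯ b x_1² b a²
over Σ = {a, b} (modelled as `Bool`, with `a := false`, `b := true`) and variables
x_i modelled by natural numbers.  Its unique solution maps x_i to a^{2^i}, and
consequently the length of the minimal solution is Θ(2^n).
-/

namespace Stmt0

/-- Patterns: words over constants `Bool` (a = `false`, b = `true`) and variables `ℕ`. -/
abbrev Pattern := List (Bool ⊕ ℕ)

/-- Apply a substitution (a morphism acting as the identity on constants) to a pattern. -/
def applySub (h : ℕ → List Bool) : Pattern → List Bool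
  | [] => []
  | Sum.inl a :: rest => a :: applySub h rest
  | Sum.inr x :: rest => h x ++ applySub h rest

def A : Bool ⊕ ℕ := Sum.inl false   -- the letter a
def B : Bool ⊕ ℕ := Sum.inl true    -- the letter b
def X (i : ℕ) : Bool ⊕ ℕ := Sum.inr i  -- the variable x_i

/-- the part `b x_{n-1} b x_{n-2} ⋯ b x_1` (for the LHS). -/
def lhsTail : ℕ → Pattern
  | 0 => []
  | i + 1 => B :: X (i + 1) :: lhsTail i

/-- LHS: `x_n a x_n b x_{n-1} b x_{n-2} ⋯ b x_1`. -/
def lhs (n : ℕ) : Pattern := X n :: A :: X n :: lhsTail (n - 1)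

/-- the part `x_{n-1}² b x_{n-2}² b ⋯ b x_1² b` read as `(x_{n-1} x_{n-1} b) ⋯ (x_1 x_1 b)`. -/
def rhsTail : ℕ → Pattern
  | 0 => []
  | i + 1 => X (i + 1) :: X (i + 1) :: B :: rhsTail i

/-- RHS: `a x_n x_{n-1}² b x_{n-2}² b ⋯ b x_1² b a²`. -/
def rhs (n : ℕ) : Pattern := A :: X n :: (rhsTail (n - 1) ++ [A, A])

end Stmt0

/-!
Comparing the prefixes of length `|h(x_n)| + 1` of both sides gives `h(x_n) a = a h(x_n)`, so
`h(x_n) = a^k` and what remains is `a^k h(b x_{n-1} ⋯ b x_1) = h(x_{n-1}² b ⋯ x_1² b) a²`.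
Writing `S` for the number of letters `b` in `h(x_1), …, h(x_{n-1})`, the two sides contain
`n - 1 + S` and `n - 1 + 2S` letters `b`, so `S = 0` and every `h(x_i)` is a power of `a`.
Matching the blocks of `a`'s between consecutive `b`'s then gives `k = 2|h(x_{n-1})|`, …,
`|h(x_2)| = 2|h(x_1)|` and `|h(x_1)| = 2`. The solution has length `3·2^n + n - 2`.
-/
theorem List.eq_replicate_of_append_singleton_eq_cons {α : Type*} {c : α} {w : List α}
    (hw : w ++ [c] = c :: w) : w = List.replicate w.length c := by
  have : Nonempty α := ⟨c⟩
  have hrot : (c :: w).rotate 1 = c :: w := by simpa using hw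
  obtain ⟨a, ha⟩ := List.rotate_one_eq_self_iff_eq_replicate.1 hrot
  rw [List.length_cons, List.replicate_succ, List.cons.injEq] at ha
  obtain ⟨rfl, hw'⟩ := ha
  exact hw'

theorem List.replicate_append_cons_inj {α : Type*} {a b : α} (hab : a ≠ b) {k j : ℕ}
    {u v : List α} :
    List.replicate k a ++ b :: u = List.replicate j a ++ b :: v ↔ k = j ∧ u = v := by
  refine ⟨fun h => ?_, fun ⟨hkj, huv⟩ => hkj ▸ huv ▸ rfl⟩
  induction k generalizing j with
  | zero =>
    cases j with
    | zero => simpa using h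
    | succ j => exact absurd (List.cons.inj h).1 hab.symm
  | succ k ih =>
    cases j with
    | zero => exact absurd (List.cons.inj h).1 hab
    | succ j =>
      obtain ⟨hkj, huv⟩ := ih (List.cons.inj h).2
      exact ⟨congrArg (· + 1) hkj, huv⟩

theorem List.eq_replicate_false_of_true_not_mem {l : List Bool} (hl : true ∉ l) :
    l = List.replicate l.length false :=
  List.eq_replicate_iff.2 ⟨rfl, fun b hb => by
    cases b
    · rfl
    · exact absurd hb hl⟩

namespace Stmt0

theorem applySub_append (h : ℕ → List Bool) (p q : Pattern) :
    applySub h (p ++ q) = applySub h p ++ applySub h q := by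
  induction p with
  | nil => rfl
  | cons x p ih => cases x <;> simp [applySub, ih]

theorem applySub_lhs_succ_eq_rhs_succ_iff (h : ℕ → List Bool) (m : ℕ) :
    applySub h (lhs (m + 1)) = applySub h (rhs (m + 1)) ↔
      h (m + 1) ++ [false] = false :: h (m + 1) ∧
        h (m + 1) ++ applySub h (lhsTail m) = applySub h (rhsTail m) ++ [false, false] := by
  have hsplit : applySub h (lhs (m + 1)) = applySub h (rhs (m + 1)) ↔
      (h (m + 1) ++ [false]) ++ (h (m + 1) ++ applySub h (lhsTail m)) =
        (false :: h (m + 1)) ++ (applySub h (rhsTail m) ++ [false, false]) := by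
    simp [lhs, rhs, applySub, applySub_append, A, X]
  rw [hsplit]
  refine ⟨fun heq => List.append_inj heq (by simp), fun ⟨h₁, h₂⟩ => by rw [h₁, h₂]⟩

theorem count_true_applySub_lhsTail (h : ℕ → List Bool) (m : ℕ) :
    (applySub h (lhsTail m)).count true = m + ∑ i ∈ Finset.Icc 1 m, (h i).count true := by
  induction m with
  | zero => simp [lhsTail, applySub]
  | succ m ih =>
    simp only [lhsTail, applySub, B, X, List.count_cons, List.count_append, ih,
      Finset.sum_Icc_succ_top (Nat.le_add_left 1 m), BEq.rfl, ↓reduceIte]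
    omega

theorem count_true_applySub_rhsTail (h : ℕ → List Bool) (m : ℕ) :
    (applySub h (rhsTail m)).count true = m + 2 * ∑ i ∈ Finset.Icc 1 m, (h i).count true := by
  induction m with
  | zero => simp [rhsTail, applySub]
  | succ m ih =>
    simp only [rhsTail, applySub, B, X, List.count_cons, List.count_append, ih,
      Finset.sum_Icc_succ_top (Nat.le_add_left 1 m), BEq.rfl, ↓reduceIte]
    omega

theorem true_not_mem_of_append_applySub_lhsTail_eq {h : ℕ → List Bool} {m : ℕ} {w : List Bool}
    (hw : true ∉ w)
    (heq : w ++ applySub h (lhsTail m) = applySub h (rhsTail m) ++ [false, false]) :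
    ∀ i, 1 ≤ i → i ≤ m → true ∉ h i := by
  intro i hi₁ hi₂
  have hcount := congrArg (List.count true) heq
  simp only [List.count_append, count_true_applySub_lhsTail, count_true_applySub_rhsTail,
    List.count_eq_zero.2 hw, show ([false, false] : List Bool).count true = 0 from rfl] at hcount
  have hsum : ∑ i ∈ Finset.Icc 1 m, (h i).count true = 0 := by omega
  exact List.count_eq_zero.1 (Finset.sum_eq_zero_iff.1 hsum i (Finset.mem_Icc.2 ⟨hi₁, hi₂⟩))

theorem replicate_append_applySub_lhsTail_eq_iff (h : ℕ → List Bool) (m : ℕ)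
    (hfree : ∀ i, 1 ≤ i → i ≤ m → true ∉ h i) (k : ℕ) :
    List.replicate k false ++ applySub h (lhsTail m) = applySub h (rhsTail m) ++ [false, false] ↔
      k = 2 ^ (m + 1) ∧ ∀ i, 1 ≤ i → i ≤ m → h i = List.replicate (2 ^ i) false := by
  induction m generalizing k with
  | zero =>
    simp only [lhsTail, rhsTail, applySub, List.append_nil, List.nil_append]
    rw [show [false, false] = List.replicate 2 false from rfl, List.replicate_left_inj]
    exact ⟨fun hk => ⟨hk, fun i hi₁ hi₂ => by omega⟩, And.left⟩
  | succ m ih =>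
    set s := (h (m + 1)).length
    have hs : h (m + 1) = List.replicate s false :=
      List.eq_replicate_false_of_true_not_mem (hfree (m + 1) le_add_self le_rfl)
    have hstep : List.replicate k false ++ applySub h (lhsTail (m + 1)) =
          applySub h (rhsTail (m + 1)) ++ [false, false] ↔
        List.replicate k false ++ true :: (List.replicate s false ++ applySub h (lhsTail m)) =
          List.replicate (s + s) false ++ true :: (applySub h (rhsTail m) ++ [false, false]) := by
      simp [lhsTail, rhsTail, applySub, B, X, hs, ← List.replicate_append_replicate]
    rw [hstep, List.replicate_append_cons_inj Bool.false_ne_true,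
      ih (fun i hi₁ hi₂ => hfree i hi₁ (by omega))]
    constructor
    · rintro ⟨hk, hs', hlow⟩
      refine ⟨by rw [hk, hs', pow_succ 2 (m + 1), mul_two], fun i hi₁ hi₂ => ?_⟩
      rcases Nat.lt_or_ge i (m + 1) with hlt | hge
      · exact hlow i hi₁ (by omega)
      · rw [show i = m + 1 by omega, hs, hs']
    · rintro ⟨rfl, hall⟩
      have hs' : s = 2 ^ (m + 1) :=
        List.replicate_left_inj.1 (hs.symm.trans (hall (m + 1) le_add_self le_rfl))
      refine ⟨by rw [hs', pow_succ 2 (m + 1), mul_two], hs', fun i hi₁ hi₂ => ?_⟩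
      exact hall i hi₁ (by omega)

theorem applySub_lhs_eq_rhs_iff (n : ℕ) (hn : 1 ≤ n) (h : ℕ → List Bool) :
    applySub h (lhs n) = applySub h (rhs n) ↔
      ∀ i, 1 ≤ i → i ≤ n → h i = List.replicate (2 ^ i) false := by
  obtain ⟨m, rfl⟩ : ∃ m, n = m + 1 := ⟨n - 1, by omega⟩
  rw [applySub_lhs_succ_eq_rhs_succ_iff]
  constructor
  · rintro ⟨hcomm, htail⟩
    have hs := List.eq_replicate_of_append_singleton_eq_cons hcomm
    have hfree := true_not_mem_of_append_applySub_lhsTail_eq (by rw [hs]; simp) htail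
    rw [hs, replicate_append_applySub_lhsTail_eq_iff h m hfree] at htail
    intro i hi₁ hi₂
    rcases Nat.lt_or_ge i (m + 1) with hlt | hge
    · exact htail.2 i hi₁ (by omega)
    · rw [show i = m + 1 by omega, hs, htail.1]
  · intro hsol
    have htop := hsol (m + 1) le_add_self le_rfl
    refine ⟨by rw [htop, ← List.replicate_succ', List.replicate_succ], ?_⟩
    rw [htop, replicate_append_applySub_lhsTail_eq_iff]
    · exact ⟨rfl, fun i hi₁ hi₂ => hsol i hi₁ (by omega)⟩
    · intro i hi₁ hi₂
      rw [hsol i hi₁ (by omega)]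
      simp

theorem length_applySub_lhsTail (h : ℕ → List Bool) (m : ℕ)
    (hsol : ∀ i, 1 ≤ i → i ≤ m → h i = List.replicate (2 ^ i) false) :
    (applySub h (lhsTail m)).length + 2 = m + 2 ^ (m + 1) := by
  induction m with
  | zero => simp [lhsTail, applySub]
  | succ m ih =>
    have := ih (fun i hi₁ hi₂ => hsol i hi₁ (by omega))
    simp only [lhsTail, applySub, B, X, List.length_cons, List.length_append,
      hsol (m + 1) le_add_self le_rfl, List.length_replicate]
    rw [pow_succ 2 (m + 1)]
    omega

theorem length_applySub_lhs (h : ℕ → List Bool) (n : ℕ) (hn : 1 ≤ n)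
    (hsol : ∀ i, 1 ≤ i → i ≤ n → h i = List.replicate (2 ^ i) false) :
    (applySub h (lhs n)).length + 2 = 3 * 2 ^ n + n := by
  obtain ⟨m, rfl⟩ : ∃ m, n = m + 1 := ⟨n - 1, by omega⟩
  have := length_applySub_lhsTail h m (fun i hi₁ hi₂ => hsol i hi₁ (by omega))
  simp only [lhs, applySub, A, X, List.length_cons, List.length_append,
    hsol (m + 1) le_add_self le_rfl, List.length_replicate, Nat.add_sub_cancel]
  omega

end Stmt0

open Stmt0 in
theorem stmt0 :
    (∀ n : ℕ, 1 ≤ n → ∀ h : ℕ → List Bool,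
      (applySub h (lhs n) = applySub h (rhs n) ↔
        ∀ i : ℕ, 1 ≤ i → i ≤ n → h i = List.replicate (2 ^ i) false)) ∧
    (∃ c₁ c₂ : ℝ, 0 < c₁ ∧ 0 < c₂ ∧
      ∀ n : ℕ, 1 ≤ n → ∀ h : ℕ → List Bool,
        applySub h (lhs n) = applySub h (rhs n) →
        (∀ g : ℕ → List Bool, applySub g (lhs n) = applySub g (rhs n) →
          (applySub h (lhs n)).length ≤ (applySub g (lhs n)).length) →
        c₁ * 2 ^ n ≤ ((applySub h (lhs n)).length : ℝ) ∧
          ((applySub h (lhs n)).length : ℝ) ≤ c₂ * 2 ^ n) := by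
  refine ⟨applySub_lhs_eq_rhs_iff, 1, 4, one_pos, by norm_num, fun n hn h hsol _ => ?_⟩
  have hlen := length_applySub_lhs h n hn ((applySub_lhs_eq_rhs_iff n hn h).1 hsol)
  have hn_lt : n < 2 ^ n := Nat.lt_two_pow_self
  have htwo : 2 ≤ 2 ^ n := Nat.le_self_pow (by omega) 2
  constructor
  · rw [one_mul]
    exact_mod_cast (by omega : 2 ^ n ≤ (applySub h (lhs n)).length)
  · exact_mod_cast (by omega : (applySub h (lhs n)).length ≤ 4 * 2 ^ n)
end

section
/- Let E: α = β be a regular-ordered word equation of length n = |αβ|, and let h be a minimal solution to E. Then |h(x)| < n for every variable x occurring in E. -/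
/-!
STATEMENT 9: if h is a minimal solution of a regular-ordered word equation
E : α = β of length n = |αβ|, then |h(x)| < n for every variable x occurring in E.
-/

namespace WEq

variable {C V : Type}

/-- Apply a substitution (identity on constants) to a pattern. -/
def applySub (h : V → List C) : List (C ⊕ V) → List C
  | [] => []
  | Sum.inl a :: rest => a :: applySub h rest
  | Sum.inr x :: rest => h x ++ applySub h rest

/-- Regular equation: each variable occurs at most once in each side. -/
def Regular [DecidableEq C] [DecidableEq V] (α β : List (C ⊕ V)) : Prop :=
  ∀ x : V, α.count (Sum.inr x) ≤ 1 ∧ β.count (Sum.inr x) ≤ 1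

/-- Regular-ordered equation: regular, and any two variables occurring on both
sides occur in the same relative order in α as in β. -/
def RegularOrdered [DecidableEq C] [DecidableEq V] (α β : List (C ⊕ V)) : Prop :=
  Regular α β ∧
  ∀ x y : V, Sum.inr x ∈ α → Sum.inr x ∈ β → Sum.inr y ∈ α → Sum.inr y ∈ β →
    (α.idxOf (Sum.inr x) < α.idxOf (Sum.inr y) ↔
      β.idxOf (Sum.inr x) < β.idxOf (Sum.inr y))

end WEq

/-!
Write `w = h α = h β`. Take a position of `w` inside the image of a variable occurring only in `α`
and *transfer* it: read the symbol covering it in `β`; if that is a variable which also occurs in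
`α`, move to the same offset inside its occurrence in `α`, and repeat. Transfer is injective and
nothing is transferred to the starting position, so the chain terminates. If it ended inside a
variable occurring only in `β`, deleting the positions of the chain from the images of the
variables would give a shorter solution. So it ends at a constant of `β`, and different starting
positions end at different constants: the variables occurring only in `α` have images of total
length at most the number of constants of `β`.

For a variable `z` occurring on both sides whose image starts `d` positions later in `h α` than in
`h β`, minimality gives `|h z| < d` unless `h z` is empty: otherwise `h z` overlaps its shift by
`d` and could be shortened by `d` (or erased if `d = 0`). Because the equation is regular-ordered,
the common variables before `z` are the same on both sides, so `d` is at most the total length of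
the constants and one-sided variables before `z` in `α`, hence at most the number of constants.
Either way `|h x|` is bounded by the number of constants of `αβ`, which is less than `|αβ|`.
-/

namespace Relation

variable {α : Type*} {r : α → α → Prop} {a b c : α}

lemma ReflTransGen.eq_of_terminal (hr : Relator.RightUnique r) (hab : ReflTransGen r a b)
    (hac : ReflTransGen r a c) (hb : ∀ d, ¬ r b d) (hc : ∀ d, ¬ r c d) : b = c := by
  rcases hab.total_of_right_unique hr hac with hbc | hcb
  · exact hbc.cases_head.resolve_right fun ⟨d, hbd, _⟩ => hb d hbd
  · exact (hcb.cases_head.resolve_right fun ⟨d, hcd, _⟩ => hc d hcd).symm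

lemma exists_reflTransGen_terminal (hr : Relator.LeftUnique r) {s : Set α} (hs : s.Finite)
    (hrs : ∀ a b, r a b → b ∈ s) (ha : ∀ d, ¬ r d a) :
    ∃ b, ReflTransGen r a b ∧ ∀ d, ¬ r b d := by
  by_contra! H
  choose! f hf using H
  have hfin : {b | ReflTransGen r a b}.Finite :=
    (hs.insert a).subset fun b hb => hb.cases_tail.imp id fun ⟨d, _, hdb⟩ => hrs d b hdb
  have hmaps : Set.MapsTo f {b | ReflTransGen r a b} {b | ReflTransGen r a b} :=
    fun b hb => hb.tail (hf b hb)
  have hinj : Set.InjOn f {b | ReflTransGen r a b} :=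
    fun b hb b' hb' he => hr (hf b hb) (he ▸ hf b' hb')
  -- an injective self-map of a finite set is onto, so `a` would have a predecessor
  obtain ⟨b, hb, hfb⟩ := ((hfin.injOn_iff_bijOn_of_mapsTo hmaps).1 hinj).surjOn
    (ReflTransGen.refl : ReflTransGen r a a)
  exact ha b (hfb ▸ hf b hb)

end Relation

namespace List

variable {A : Type} {a e : A} {μ ν : List A}

lemma notMem_of_count_append_cons_le_one [BEq A] [LawfulBEq A]
    (h : (μ ++ a :: ν).count a ≤ 1) : a ∉ μ ∧ a ∉ ν := by
  rw [count_append, count_cons_self] at h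
  rw [← count_eq_zero, ← count_eq_zero]
  omega

lemma idxOf_lt_idxOf_append_cons_iff [BEq A] [LawfulBEq A] (he : e ∉ μ) :
    (μ ++ e :: ν).idxOf a < (μ ++ e :: ν).idxOf e ↔ a ∈ μ := by
  rw [idxOf_append_of_notMem he, idxOf_cons_self, Nat.add_zero]
  by_cases ha : a ∈ μ
  · simp [ha, idxOf_append_of_mem ha, idxOf_lt_length_of_mem ha]
  · simp [ha, idxOf_append_of_notMem ha]

lemma exists_shorter_of_append_append_eq {u x ν' : List A} (hx : x ≠ [])
    (hux : u.length ≤ x.length) (heq : u ++ (x ++ ν) = x ++ ν') :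
    ∃ y : List A, y.length < x.length ∧ u ++ (y ++ ν) = y ++ ν' := by
  by_cases hu : u = []
  · subst hu
    exact ⟨[], length_pos_iff.2 hx, append_cancel_left heq⟩
  obtain ⟨y, rfl⟩ : u <+: x :=
    prefix_of_prefix_length_le (heq ▸ prefix_append u _) (prefix_append x ν') hux
  refine ⟨y, by simpa using length_pos_iff.2 hu, ?_⟩
  rw [append_assoc, append_assoc] at heq
  exact append_cancel_left heq

end List

namespace WEq

variable {C V : Type}

section Symbols

variable [DecidableEq C] [DecidableEq V]

-- `count` and `idxOf` in `Regular` and `RegularOrdered` use the componentwise `Sum.instBEq`.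
instance : LawfulBEq (C ⊕ V) where
  rfl {a} := by cases a <;> (rename_i v; exact beq_self_eq_true v)
  eq_of_beq {a b} h := by
    cases a <;> cases b <;> first
      | exact congrArg _ (eq_of_beq h) | exact absurd h Bool.false_ne_true

def isVarIn (β : List (C ⊕ V)) (s : C ⊕ V) : Bool := s.isRight && decide (s ∈ β)

def isVarNotIn (β : List (C ⊕ V)) (s : C ⊕ V) : Bool := s.isRight && !decide (s ∈ β)

@[simp] lemma isVarIn_inl (β : List (C ⊕ V)) (a : C) : isVarIn β (Sum.inl a) = false := rfl

@[simp] lemma isVarIn_inr (β : List (C ⊕ V)) (z : V) :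
    isVarIn β (Sum.inr z) = decide (Sum.inr z ∈ β) := rfl

@[simp] lemma isVarNotIn_inl (β : List (C ⊕ V)) (a : C) : isVarNotIn β (Sum.inl a) = false := rfl

@[simp] lemma isVarNotIn_inr (β : List (C ⊕ V)) (z : V) :
    isVarNotIn β (Sum.inr z) = !decide (Sum.inr z ∈ β) := rfl

end Symbols

def img (h : V → List C) : C ⊕ V → List C
  | Sum.inl a => [a]
  | Sum.inr x => h x

section Substitution

variable (h : V → List C)

lemma applySub_cons (s : C ⊕ V) (σ : List (C ⊕ V)) :
    applySub h (s :: σ) = img h s ++ applySub h σ := by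
  cases s <;> rfl

lemma applySub_append (σ τ : List (C ⊕ V)) :
    applySub h (σ ++ τ) = applySub h σ ++ applySub h τ := by
  induction σ with
  | nil => rfl
  | cons s σ ih => rw [List.cons_append, applySub_cons, applySub_cons, ih, List.append_assoc]

lemma applySub_append_cons_inr (μ ν : List (C ⊕ V)) (z : V) :
    applySub h (μ ++ Sum.inr z :: ν) = applySub h μ ++ (h z ++ applySub h ν) := by
  rw [applySub_append, applySub_cons, img]

lemma length_applySub (σ : List (C ⊕ V)) :
    (applySub h σ).length = (σ.map fun s => (img h s).length).sum := by
  induction σ with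
  | nil => rfl
  | cons s σ ih => rw [applySub_cons, List.length_append, ih, List.map_cons, List.sum_cons]

lemma length_applySub_eq_of_perm {σ τ : List (C ⊕ V)} (hστ : σ.Perm τ) :
    (applySub h σ).length = (applySub h τ).length := by
  rw [length_applySub, length_applySub]
  exact (hστ.map _).sum_eq

lemma length_le_length_applySub_of_mem {z : V} {σ : List (C ⊕ V)} (hz : Sum.inr z ∈ σ) :
    (h z).length ≤ (applySub h σ).length := by
  obtain ⟨μ, ν, rfl⟩ := List.append_of_mem hz
  rw [applySub_append_cons_inr]
  simp only [List.length_append]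
  omega

lemma length_applySub_filter_isLeft (σ : List (C ⊕ V)) :
    (applySub h (σ.filter Sum.isLeft)).length = σ.countP Sum.isLeft := by
  induction σ with
  | nil => rfl
  | cons s σ ih => cases s <;> simp [applySub, List.filter_cons, List.countP_cons, ih]

lemma length_applySub_filter_add_filter_not (Q : C ⊕ V → Bool) (σ : List (C ⊕ V)) :
    (applySub h (σ.filter Q)).length + (applySub h (σ.filter (!Q ·))).length =
      (applySub h σ).length := by
  induction σ with
  | nil => rfl
  | cons s σ ih => cases hQ : Q s <;> simp [hQ, applySub_cons] <;> omega

variable [DecidableEq V]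

lemma applySub_update_of_notMem {z : V} (w : List C) {σ : List (C ⊕ V)}
    (hz : Sum.inr z ∉ σ) : applySub (Function.update h z w) σ = applySub h σ := by
  induction σ with
  | nil => rfl
  | cons s σ ih =>
    rw [List.mem_cons, not_or] at hz
    rw [applySub_cons, applySub_cons, ih hz.2]
    cases s with
    | inl a => rfl
    | inr x => rw [img, img, Function.update_of_ne (fun hx => hz.1 (congrArg Sum.inr hx).symm)]

lemma applySub_update_append_cons {z : V} (w : List C) {μ ν : List (C ⊕ V)}
    (hμ : Sum.inr z ∉ μ) (hν : Sum.inr z ∉ ν) :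
    applySub (Function.update h z w) (μ ++ Sum.inr z :: ν) =
      applySub h μ ++ (w ++ applySub h ν) := by
  rw [applySub_append_cons_inr, applySub_update_of_notMem h w hμ,
    applySub_update_of_notMem h w hν, Function.update_self]

variable [DecidableEq C]

lemma length_applySub_filter_not_isVarIn (β σ : List (C ⊕ V)) :
    (applySub h (σ.filter (!isVarIn β ·))).length =
      σ.countP Sum.isLeft + (applySub h (σ.filter (isVarNotIn β))).length := by
  induction σ with
  | nil => rfl
  | cons s σ ih =>
    rcases s with a | z
    · simp [applySub_cons, img, ih, List.countP_cons]
      omega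
    · by_cases hz : Sum.inr z ∈ β <;> simp [applySub_cons, hz, ih, Nat.add_left_comm]

end Substitution

section Positions

variable (h : V → List C)

/-- The symbol of `σ` whose image covers position `p` of `applySub h σ`, and the offset of `p`
inside that image. -/
def cover : List (C ⊕ V) → ℕ → Option ((C ⊕ V) × ℕ)
  | [], _ => none
  | s :: σ, p => if p < (img h s).length then some (s, p) else cover σ (p - (img h s).length)

variable {h}

lemma cover_cons_of_lt {s : C ⊕ V} {σ : List (C ⊕ V)} {p : ℕ} (hp : p < (img h s).length) :
    cover h (s :: σ) p = some (s, p) := if_pos hp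

lemma cover_cons_add (s : C ⊕ V) (σ : List (C ⊕ V)) (p : ℕ) :
    cover h (s :: σ) ((img h s).length + p) = cover h σ p := by
  simp [cover]

lemma cover_append_add (μ σ : List (C ⊕ V)) (p : ℕ) :
    cover h (μ ++ σ) ((applySub h μ).length + p) = cover h σ p := by
  induction μ with
  | nil => simp [applySub]
  | cons s μ ih =>
    rw [List.cons_append, applySub_cons, List.length_append, Nat.add_assoc, cover_cons_add, ih]

lemma exists_cover_of_lt {σ : List (C ⊕ V)} {p : ℕ} (hp : p < (applySub h σ).length) :
    ∃ s r, cover h σ p = some (s, r) := by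
  induction σ generalizing p with
  | nil => simp [applySub] at hp
  | cons s σ ih =>
    rw [applySub_cons, List.length_append] at hp
    by_cases hs : p < (img h s).length
    · exact ⟨s, p, cover_cons_of_lt hs⟩
    · obtain ⟨k, rfl⟩ := Nat.exists_eq_add_of_le (Nat.le_of_not_lt hs)
      rw [cover_cons_add]
      exact ih (by omega)

lemma eq_append_cons_of_cover {σ : List (C ⊕ V)} {p : ℕ} {s : C ⊕ V} {r : ℕ}
    (hc : cover h σ p = some (s, r)) :
    ∃ μ ν, σ = μ ++ s :: ν ∧ p = (applySub h μ).length + r ∧ r < (img h s).length := by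
  induction σ generalizing p with
  | nil => simp [cover] at hc
  | cons s₀ σ ih =>
    by_cases hs : p < (img h s₀).length
    · obtain ⟨rfl, rfl⟩ := Prod.mk.inj (Option.some.inj ((cover_cons_of_lt hs).symm.trans hc))
      exact ⟨[], σ, rfl, (Nat.zero_add _).symm, hs⟩
    · obtain ⟨k, rfl⟩ := Nat.exists_eq_add_of_le (Nat.le_of_not_lt hs)
      rw [cover_cons_add] at hc
      obtain ⟨μ, ν, rfl, rfl, hr⟩ := ih hc
      exact ⟨s₀ :: μ, ν, rfl, by rw [applySub_cons, List.length_append]; omega, hr⟩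

lemma lt_length_of_cover {σ : List (C ⊕ V)} {p : ℕ} {s : C ⊕ V} {r : ℕ}
    (hc : cover h σ p = some (s, r)) : p < (applySub h σ).length := by
  obtain ⟨μ, ν, rfl, rfl, hr⟩ := eq_append_cons_of_cover hc
  rw [applySub_append, applySub_cons, List.length_append, List.length_append]
  omega

lemma card_filter_cover (σ : List (C ⊕ V)) (Q : C ⊕ V → Bool) :
    ((Finset.range (applySub h σ).length).filter fun p => (cover h σ p).any (Q ·.1)).card =
      (applySub h (σ.filter Q)).length := by
  induction σ with
  | nil => rfl
  | cons s σ ih =>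
    rw [Finset.card_filter] at ih ⊢
    rw [applySub_cons, List.length_append, Finset.sum_range_add]
    simp only [cover_cons_add, ih, List.filter_cons]
    rw [Finset.sum_congr rfl fun p hp => by rw [cover_cons_of_lt (Finset.mem_range.1 hp)]]
    cases hQ : Q s <;> simp [hQ, applySub_cons]

end Positions

section StartPositions

variable [DecidableEq C] [DecidableEq V] (h : V → List C)

def startPos (σ : List (C ⊕ V)) (z : V) : ℕ :=
  (applySub h (σ.take (σ.idxOf (Sum.inr z)))).length

variable {h} {σ μ ν : List (C ⊕ V)} {z z' : V} {p r r' : ℕ}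

lemma startPos_append_cons (hμ : Sum.inr z ∉ μ) :
    startPos h (μ ++ Sum.inr z :: ν) z = (applySub h μ).length := by
  rw [startPos, List.idxOf_append_of_notMem hμ, List.idxOf_cons_self, Nat.add_zero, List.take_left]

lemma cover_startPos_add (hz : Sum.inr z ∈ σ) (hr : r < (h z).length) :
    cover h σ (startPos h σ z + r) = some (Sum.inr z, r) := by
  obtain ⟨μ, ν, rfl, hμ⟩ := List.eq_append_cons_of_mem hz
  rw [startPos_append_cons hμ, cover_append_add]
  exact cover_cons_of_lt hr

lemma startPos_add_injective (hz : Sum.inr z ∈ σ) (hz' : Sum.inr z' ∈ σ)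
    (hr : r < (h z).length) (hr' : r' < (h z').length)
    (he : startPos h σ z + r = startPos h σ z' + r') : z = z' ∧ r = r' := by
  have hc := (cover_startPos_add hz hr).symm.trans (he ▸ cover_startPos_add hz' hr')
  obtain ⟨hzz, rfl⟩ := Prod.mk.inj (Option.some.inj hc)
  exact ⟨Sum.inr.inj hzz, rfl⟩

lemma eq_startPos_add_of_cover (hσ : σ.count (Sum.inr z) ≤ 1)
    (hc : cover h σ p = some (Sum.inr z, r)) :
    p = startPos h σ z + r ∧ Sum.inr z ∈ σ ∧ r < (h z).length := by
  obtain ⟨μ, ν, rfl, rfl, hr⟩ := eq_append_cons_of_cover hc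
  rw [startPos_append_cons (List.notMem_of_count_append_cons_le_one hσ).1]
  exact ⟨rfl, by simp, hr⟩

end StartPositions

section Keep

variable {A : Type}

def keep (m : ℕ → Bool) : List A → List A
  | [] => []
  | a :: w => (if m 0 then [a] else []) ++ keep (fun i => m (i + 1)) w

lemma keep_congr {m m' : ℕ → Bool} {w : List A} (hm : ∀ i < w.length, m i = m' i) :
    keep m w = keep m' w := by
  induction w generalizing m m' with
  | nil => rfl
  | cons a w ih =>
    rw [keep, keep, hm 0 (by simp), ih fun i hi => hm (i + 1) (by simpa using hi)]

lemma keep_append (m : ℕ → Bool) (u v : List A) :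
    keep m (u ++ v) = keep m u ++ keep (fun i => m (u.length + i)) v := by
  induction u generalizing m with
  | nil => simp [keep]
  | cons a u ih =>
    rw [List.cons_append, keep, keep, ih, List.append_assoc]
    congr 3
    funext i
    rw [List.length_cons]
    congr 1
    omega

lemma length_keep_le (m : ℕ → Bool) (w : List A) : (keep m w).length ≤ w.length := by
  induction w generalizing m with
  | nil => rfl
  | cons a w ih =>
    have := ih fun i => m (i + 1)
    rw [keep, List.length_append, List.length_cons]
    split <;> simp <;> omega

lemma length_keep_lt {m : ℕ → Bool} {w : List A} {j : ℕ} (hj : j < w.length) (hm : m j = false) :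
    (keep m w).length < w.length := by
  induction w generalizing m j with
  | nil => simp at hj
  | cons a w ih =>
    rw [keep, List.length_append, List.length_cons]
    cases j with
    | zero =>
      have := length_keep_le (fun i => m (i + 1)) w
      simp [hm]
      omega
    | succ j =>
      have := ih (m := fun i => m (i + 1)) (Nat.lt_of_succ_lt_succ hj) hm
      split <;> simp <;> omega

end Keep

/-- `K s r` tells whether offset `r` inside the image of the symbol `s` is kept. -/
lemma applySub_keep {h : V → List C} (K : C ⊕ V → ℕ → Bool) (hK : ∀ a, K (Sum.inl a) 0 = true)
    (σ : List (C ⊕ V)) (m : ℕ → Bool) (hm : ∀ p s r, cover h σ p = some (s, r) → m p = K s r) :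
    applySub (fun z => keep (K (Sum.inr z)) (h z)) σ = keep m (applySub h σ) := by
  induction σ generalizing m with
  | nil => rfl
  | cons s σ ih =>
    rw [applySub_cons, applySub_cons, keep_append,
      ih _ fun p s' r hc => hm _ s' r (by rwa [cover_cons_add])]
    congr 1
    cases s with
    | inl a =>
      rw [img, img, keep, hm 0 _ 0 (cover_cons_of_lt (by simp [img])), hK]
      rfl
    | inr z => exact keep_congr fun r hr => (hm r _ r (cover_cons_of_lt hr)).symm

def IsMinimalSolution (h : V → List C) (α β : List (C ⊕ V)) : Prop :=
  applySub h α = applySub h β ∧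
    ∀ g : V → List C, applySub g α = applySub g β → (applySub h α).length ≤ (applySub g α).length

lemma IsMinimalSolution.symm {h : V → List C} {α β : List (C ⊕ V)}
    (hmin : IsMinimalSolution h α β) : IsMinimalSolution h β α := by
  refine ⟨hmin.1.symm, fun g hg => ?_⟩
  rw [← hmin.1, hg]
  exact hmin.2 g hg.symm

variable [DecidableEq C] [DecidableEq V]

/-- `Transfer h α β p q`: position `p` (read in `applySub h β`) and position `q` (read in
`applySub h α`) sit at the same offset inside the two occurrences of a variable common to `α`
and `β`. -/
def Transfer (h : V → List C) (α β : List (C ⊕ V)) (p q : ℕ) : Prop :=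
  ∃ z r, Sum.inr z ∈ α ∧ Sum.inr z ∈ β ∧ r < (h z).length ∧
    p = startPos h β z + r ∧ q = startPos h α z + r

variable {h : V → List C} {α β : List (C ⊕ V)}

lemma transfer_swap {p q : ℕ} : Transfer h β α q p ↔ Transfer h α β p q := by
  simp only [Transfer]
  constructor <;> rintro ⟨z, r, h1, h2, h3, h4, h5⟩ <;> exact ⟨z, r, h2, h1, h3, h5, h4⟩

lemma transfer_rightUnique : Relator.RightUnique (Transfer h α β) := by
  rintro p q q' ⟨z, r, -, hzβ, hr, rfl, rfl⟩ ⟨z', r', -, hzβ', hr', hp, rfl⟩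
  obtain ⟨rfl, rfl⟩ := startPos_add_injective hzβ hzβ' hr hr' hp
  rfl

lemma transfer_leftUnique : Relator.LeftUnique (Transfer h α β) :=
  fun _ _ _ hp hp' => transfer_rightUnique (transfer_swap.2 hp) (transfer_swap.2 hp')

lemma cover_of_transfer {p q : ℕ} (hpq : Transfer h α β p q) :
    ∃ z r, Sum.inr z ∈ α ∧ cover h β p = some (Sum.inr z, r) := by
  obtain ⟨z, r, hzα, hzβ, hr, rfl, -⟩ := hpq
  exact ⟨z, r, hzα, cover_startPos_add hzβ hr⟩

/-- Deleting the positions in `O` from the images of the variables would give a shorter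
solution. -/
lemma IsMinimalSolution.eq_empty_of_closed (hmin : IsMinimalSolution h α β)
    (hα : ∀ z : V, α.count (Sum.inr z) ≤ 1) (hβ : ∀ z : V, β.count (Sum.inr z) ≤ 1) {O : Set ℕ}
    (hOα : ∀ p ∈ O, ∃ z r, cover h α p = some (Sum.inr z, r))
    (hOβ : ∀ p ∈ O, ∃ z r, cover h β p = some (Sum.inr z, r))
    (hO : ∀ p q, Transfer h α β p q → (p ∈ O ↔ q ∈ O)) : O = ∅ := by
  classical
  by_contra hne
  obtain ⟨p₀, hp₀⟩ := Set.nonempty_iff_ne_empty.2 hne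
  let deleted (z : V) (r : ℕ) : Prop :=
    if Sum.inr z ∈ α then startPos h α z + r ∈ O else startPos h β z + r ∈ O
  let K : C ⊕ V → ℕ → Bool
    | Sum.inl _, _ => true
    | Sum.inr z, r => !decide (deleted z r)
  have hkeep : ∀ σ : List (C ⊕ V), (∀ z : V, σ.count (Sum.inr z) ≤ 1) →
      (∀ p ∈ O, ∃ z r, cover h σ p = some (Sum.inr z, r)) →
      (∀ z r, Sum.inr z ∈ σ → r < (h z).length → (startPos h σ z + r ∈ O ↔ deleted z r)) →
      applySub (fun z => keep (K (Sum.inr z)) (h z)) σ =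
        keep (fun p => !decide (p ∈ O)) (applySub h σ) := by
    intro σ hσ hOσ hσO
    refine applySub_keep K (fun _ => rfl) σ _ fun p s r hc => ?_
    cases s with
    | inl a =>
      have hp : p ∉ O := fun hp => by
        obtain ⟨z, r', hc'⟩ := hOσ p hp
        simp [hc] at hc'
      simp [K, hp]
    | inr z =>
      obtain ⟨rfl, hz, hr⟩ := eq_startPos_add_of_cover (hσ z) hc
      simp [K, hσO z r hz hr]
  have hkeepα := hkeep α hα hOα fun z r hz _ => by simp [deleted, hz]
  have hkeepβ := hkeep β hβ hOβ fun z r hz hr => by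
    by_cases hzα : Sum.inr z ∈ α
    · simpa [deleted, hzα] using hO _ _ ⟨z, r, hzα, hz, hr, rfl, rfl⟩
    · simp [deleted, hzα]
  have hle := hmin.2 _ (by rw [hkeepα, hkeepβ, hmin.1])
  obtain ⟨z, r, hc⟩ := hOα p₀ hp₀
  have hlt := length_keep_lt (m := fun p => !decide (p ∈ O)) (lt_length_of_cover hc)
    (by simpa using hp₀)
  rw [hkeepα] at hle
  omega

open Relation

lemma not_transfer_of_cover {p r : ℕ} {x : V} (hc : cover h α p = some (Sum.inr x, r))
    (hx : Sum.inr x ∉ β) (d : ℕ) : ¬ Transfer h α β d p := by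
  intro hdp
  obtain ⟨z, r', hzβ, hc'⟩ := cover_of_transfer (transfer_swap.2 hdp)
  rw [hc] at hc'
  cases Option.some.inj hc'
  exact hx hzβ

lemma IsMinimalSolution.exists_terminal_cover_inl (hmin : IsMinimalSolution h α β)
    (hα : ∀ z : V, α.count (Sum.inr z) ≤ 1) (hβ : ∀ z : V, β.count (Sum.inr z) ≤ 1)
    {p r : ℕ} {x : V} (hc : cover h α p = some (Sum.inr x, r)) (hx : Sum.inr x ∉ β) :
    ∃ e, ReflTransGen (Transfer h α β) p e ∧ (∀ d, ¬ Transfer h α β e d) ∧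
      ∃ a r', cover h β e = some (Sum.inl a, r') := by
  have hcoverα : ∀ q, ReflTransGen (Transfer h α β) p q →
      ∃ z r, cover h α q = some (Sum.inr z, r) := fun q hq => by
      rcases hq.cases_tail with rfl | ⟨c, -, hcq⟩
      · exact ⟨x, r, hc⟩
      · obtain ⟨z, r, -, hz⟩ := cover_of_transfer (transfer_swap.2 hcq)
        exact ⟨z, r, hz⟩
  obtain ⟨e, hpe, he⟩ := exists_reflTransGen_terminal transfer_leftUnique
    (Set.finite_Iio (applySub h α).length)
    (fun _ q hq => by
      obtain ⟨z, r, -, hz⟩ := cover_of_transfer (transfer_swap.2 hq)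
      exact lt_length_of_cover hz)
    (not_transfer_of_cover hc hx)
  refine ⟨e, hpe, he, ?_⟩
  obtain ⟨z₀, r₀, hcα⟩ := hcoverα e hpe
  obtain ⟨s, r', hs⟩ := exists_cover_of_lt (hmin.1 ▸ lt_length_of_cover hcα)
  rcases s with a | z
  · exact ⟨a, r', hs⟩
  exfalso
  obtain ⟨rfl, hzβ, hr'⟩ := eq_startPos_add_of_cover (hβ z) hs
  by_cases hzα : Sum.inr z ∈ α
  · exact he _ ⟨z, r', hzα, hzβ, hr', rfl, rfl⟩
  -- the chain ends inside a variable occurring only in `β`, so it could be deleted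
  have hclosed := hmin.eq_empty_of_closed hα hβ (O := {q | ReflTransGen (Transfer h α β) p q})
    hcoverα
    (fun q hq => by
      by_cases hterm : ∃ d, Transfer h α β q d
      · obtain ⟨d, hqd⟩ := hterm
        obtain ⟨z, r, -, hz⟩ := cover_of_transfer hqd
        exact ⟨z, r, hz⟩
      · exact ⟨z, r', hq.eq_of_terminal transfer_rightUnique hpe (not_exists.1 hterm) he ▸ hs⟩)
    (fun q q' hqq' => ⟨fun hq => hq.tail hqq', fun hq' => by
      rcases hq'.cases_tail with rfl | ⟨c, hpc, hcq'⟩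
      · exact absurd hqq' (not_transfer_of_cover hc hx q)
      · exact transfer_leftUnique hcq' hqq' ▸ hpc⟩)
  exact (Set.eq_empty_iff_forall_notMem.1 hclosed) p ReflTransGen.refl

/-- Sending each position of `applySub h α` inside a variable not occurring in `β` to the end of
its transfer chain is injective. -/
lemma IsMinimalSolution.length_applySub_filter_isVarNotIn_le (hmin : IsMinimalSolution h α β)
    (hα : ∀ z : V, α.count (Sum.inr z) ≤ 1) (hβ : ∀ z : V, β.count (Sum.inr z) ≤ 1) :
    (applySub h (α.filter (isVarNotIn β))).length ≤ β.countP Sum.isLeft := by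
  rw [← card_filter_cover, ← length_applySub_filter_isLeft h, ← card_filter_cover]
  have hstart : ∀ p ∈ (Finset.range (applySub h α).length).filter
      (fun p => (cover h α p).any (isVarNotIn β ·.1)),
      ∃ x r, cover h α p = some (Sum.inr x, r) ∧ Sum.inr x ∉ β := by
    intro p hp
    rw [Finset.mem_filter] at hp
    rcases hc : cover h α p with _ | ⟨_ | x, r⟩ <;> simp [hc, isVarNotIn] at hp
    exact ⟨x, r, rfl, hp.2⟩
  choose! x r hc hx using hstart
  choose! e hpe he hconst using
    fun p hp => hmin.exists_terminal_cover_inl hα hβ (hc p hp) (hx p hp)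
  refine Finset.card_le_card_of_injOn e (fun p hp => ?_) fun p hp p' hp' hpp' => ?_
  · obtain ⟨a, r', hcβ⟩ := hconst p hp
    simp [lt_length_of_cover hcβ, hcβ]
  · exact ReflTransGen.eq_of_terminal (r := Function.swap (Transfer h α β))
      (fun _ _ _ h₁ h₂ => transfer_leftUnique h₁ h₂)
      (reflTransGen_swap.2 (hpe p hp)) (hpp' ▸ reflTransGen_swap.2 (hpe p' hp'))
      (not_transfer_of_cover (hc p hp) (hx p hp)) (not_transfer_of_cover (hc p' hp') (hx p' hp'))

lemma nodup_filter_of_count_le_one {σ : List (C ⊕ V)} (hσ : ∀ z : V, σ.count (Sum.inr z) ≤ 1)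
    {Q : C ⊕ V → Bool} (hQ : ∀ s, Q s = true → s.isRight) : (σ.filter Q).Nodup := by
  rw [List.nodup_iff_count_le_one]
  intro s
  by_cases hs : Q s
  · rw [List.count_filter hs]
    obtain ⟨z, rfl⟩ := Sum.isRight_iff.1 (hQ s hs)
    exact hσ z
  · rw [List.count_eq_zero.2 fun hm => hs (List.mem_filter.1 hm).2]
    exact zero_le_one

lemma RegularOrdered.symm {α β : List (C ⊕ V)} (hro : RegularOrdered α β) :
    RegularOrdered β α :=
  ⟨fun z => (hro.1 z).symm, fun x y hxβ hxα hyβ hyα => (hro.2 x y hxα hxβ hyα hyβ).symm⟩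

/-- The common variables preceding `z` are the same on both sides. -/
lemma RegularOrdered.length_applySub_filter_isVarIn_eq {h : V → List C} {z : V}
    {μ ν μ' ν' : List (C ⊕ V)} (hro : RegularOrdered (μ ++ Sum.inr z :: ν) (μ' ++ Sum.inr z :: ν'))
    (hμ : Sum.inr z ∉ μ) (hμ' : Sum.inr z ∉ μ') :
    (applySub h (μ.filter (isVarIn (μ' ++ Sum.inr z :: ν')))).length =
      (applySub h (μ'.filter (isVarIn (μ ++ Sum.inr z :: ν)))).length := by
  refine length_applySub_eq_of_perm h <| (List.perm_ext_iff_of_nodup ?_ ?_).2 fun s => ?_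
  · refine nodup_filter_of_count_le_one (fun y => ?_) fun s hs => (Bool.and_eq_true _ _ ▸ hs).1
    exact ((List.sublist_append_left μ _).count_le _).trans (hro.1 y).1
  · refine nodup_filter_of_count_le_one (fun y => ?_) fun s hs => (Bool.and_eq_true _ _ ▸ hs).1
    exact ((List.sublist_append_left μ' _).count_le _).trans (hro.1 y).2
  rcases s with a | y
  · simp [isVarIn]
  have hmem := hro.2 y z
  rw [List.idxOf_lt_idxOf_append_cons_iff hμ, List.idxOf_lt_idxOf_append_cons_iff hμ'] at hmem
  simp only [List.mem_filter, isVarIn, Sum.isRight_inr, Bool.true_and, decide_eq_true_eq]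
  constructor
  · rintro ⟨hyμ, hyβ⟩
    have hyα : Sum.inr y ∈ μ ++ Sum.inr z :: ν := List.mem_append_left _ hyμ
    exact ⟨(hmem hyα hyβ (by simp) (by simp)).1 hyμ, hyα⟩
  · rintro ⟨hyμ', hyα⟩
    have hyβ : Sum.inr y ∈ μ' ++ Sum.inr z :: ν' := List.mem_append_left _ hyμ'
    exact ⟨(hmem hyα hyβ (by simp) (by simp)).2 hyμ', hyβ⟩

/-- Otherwise `h z` overlaps its own shift by the difference and could be shortened. -/
lemma IsMinimalSolution.length_lt_startPos_sub (hmin : IsMinimalSolution h α β)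
    (hα : ∀ z : V, α.count (Sum.inr z) ≤ 1) (hβ : ∀ z : V, β.count (Sum.inr z) ≤ 1) {z : V}
    (hzα : Sum.inr z ∈ α) (hzβ : Sum.inr z ∈ β) (hle : startPos h β z ≤ startPos h α z)
    (hz : h z ≠ []) : (h z).length < startPos h α z - startPos h β z := by
  obtain ⟨μ, ν, rfl, hμ⟩ := List.eq_append_cons_of_mem hzα
  obtain ⟨μ', ν', rfl, hμ'⟩ := List.eq_append_cons_of_mem hzβ
  have hν := (List.notMem_of_count_append_cons_le_one (hα z)).2
  have hν' := (List.notMem_of_count_append_cons_le_one (hβ z)).2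
  rw [startPos_append_cons hμ, startPos_append_cons hμ'] at hle ⊢
  have hsol := hmin.1
  rw [applySub_append_cons_inr, applySub_append_cons_inr] at hsol
  have hprefix : applySub h μ' <+: applySub h μ ++ (h z ++ applySub h ν) :=
    hsol ▸ List.prefix_append _ _
  obtain ⟨e, he⟩ := List.prefix_of_prefix_length_le hprefix (List.prefix_append _ _) hle
  rw [← he, List.append_assoc] at hsol
  have hlen : (applySub h μ).length = (applySub h μ').length + e.length := by
    rw [← he, List.length_append]
  by_contra! hlong
  obtain ⟨y, hy, hyeq⟩ := List.exists_shorter_of_append_append_eq hz (by omega)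
    (List.append_cancel_left hsol)
  have hshorter := hmin.2 (Function.update h z y) <| by
    rw [applySub_update_append_cons h y hμ hν, applySub_update_append_cons h y hμ' hν', ← he,
      List.append_assoc, hyeq]
  rw [applySub_update_append_cons h y hμ hν, applySub_append_cons_inr] at hshorter
  simp only [List.length_append] at hshorter
  omega

lemma RegularOrdered.startPos_sub_startPos_le (hro : RegularOrdered α β) {z : V}
    (hzα : Sum.inr z ∈ α) (hzβ : Sum.inr z ∈ β) :
    startPos h α z - startPos h β z ≤ (applySub h (α.filter (!isVarIn β ·))).length := by
  obtain ⟨μ, ν, rfl, hμ⟩ := List.eq_append_cons_of_mem hzα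
  obtain ⟨μ', ν', rfl, hμ'⟩ := List.eq_append_cons_of_mem hzβ
  rw [startPos_append_cons hμ, startPos_append_cons hμ', List.filter_append, applySub_append,
    List.length_append]
  have := hro.length_applySub_filter_isVarIn_eq (h := h) hμ hμ'
  have := length_applySub_filter_add_filter_not h (isVarIn (μ' ++ Sum.inr z :: ν')) μ
  have := length_applySub_filter_add_filter_not h (isVarIn (μ ++ Sum.inr z :: ν)) μ'
  omega

lemma IsMinimalSolution.length_le_of_startPos_le (hmin : IsMinimalSolution h α β)
    (hro : RegularOrdered α β) {z : V} (hzα : Sum.inr z ∈ α) (hzβ : Sum.inr z ∈ β)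
    (hle : startPos h β z ≤ startPos h α z) :
    (h z).length ≤ α.countP Sum.isLeft + β.countP Sum.isLeft := by
  obtain ⟨hα, hβ⟩ := forall_and.1 hro.1
  by_cases hz : h z = []
  · simp [hz]
  calc (h z).length
      ≤ startPos h α z - startPos h β z := (hmin.length_lt_startPos_sub hα hβ hzα hzβ hle hz).le
    _ ≤ (applySub h (α.filter (!isVarIn β ·))).length := hro.startPos_sub_startPos_le hzα hzβ
    _ = α.countP Sum.isLeft + (applySub h (α.filter (isVarNotIn β))).length :=
      length_applySub_filter_not_isVarIn h β α
    _ ≤ α.countP Sum.isLeft + β.countP Sum.isLeft :=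
      Nat.add_le_add_left (hmin.length_applySub_filter_isVarNotIn_le hα hβ) _

lemma IsMinimalSolution.length_le_countP_isLeft (hmin : IsMinimalSolution h α β)
    (hro : RegularOrdered α β) {z : V} (hzα : Sum.inr z ∈ α) :
    (h z).length ≤ α.countP Sum.isLeft + β.countP Sum.isLeft := by
  obtain ⟨hα, hβ⟩ := forall_and.1 hro.1
  by_cases hzβ : Sum.inr z ∈ β
  · rcases le_total (startPos h β z) (startPos h α z) with hle | hle
    · exact hmin.length_le_of_startPos_le hro hzα hzβ hle
    · rw [Nat.add_comm]
      exact hmin.symm.length_le_of_startPos_le hro.symm hzβ hzα hle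
  · calc (h z).length
        ≤ (applySub h (α.filter (isVarNotIn β))).length :=
          length_le_length_applySub_of_mem h (List.mem_filter.2 ⟨hzα, by simp [hzβ]⟩)
      _ ≤ β.countP Sum.isLeft := hmin.length_applySub_filter_isVarNotIn_le hα hβ
      _ ≤ α.countP Sum.isLeft + β.countP Sum.isLeft := Nat.le_add_left _ _

end WEq

open WEq in
theorem stmt9 (C V : Type) [DecidableEq C] [DecidableEq V]
    (α β : List (C ⊕ V)) (h : V → List C)
    (hro : RegularOrdered α β)
    (hsol : applySub h α = applySub h β)
    (hmin : ∀ g : V → List C, applySub g α = applySub g β →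
      (applySub h α).length ≤ (applySub g α).length) :
    ∀ x : V, Sum.inr x ∈ α ++ β → (h x).length < (α ++ β).length := by
  intro x hx
  have hminimal : IsMinimalSolution h α β := ⟨hsol, hmin⟩
  have hbound : (h x).length ≤ (α ++ β).countP Sum.isLeft := by
    rw [List.countP_append]
    rcases List.mem_append.1 hx with hxα | hxβ
    · exact hminimal.length_le_countP_isLeft hro hxα
    · rw [Nat.add_comm]
      exact hminimal.symm.length_le_countP_isLeft hro.symm hxβ
  have hvar : (α ++ β).countP Sum.isLeft < (α ++ β).length := by
    rw [List.countP_eq_length_filter]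
    exact List.length_filter_lt_length_iff_exists.2 ⟨_, hx, by simp⟩
  omega
end

section
/- Let k ∈ ℕ and let v_0, v_1, …, v_k, u_1, u_2, …, u_k ∈ Σ^* be constant words, and let x, x_0, x_1, …, x_{2k+1} be distinct variables. Let Ψ be the system of word equations x = x_0 v_0 x_1, x = x_1 u_1 x_2, x = x_2 v_1 x_3, x = x_3 u_2 x_4, …, x = x_{2k} v_k x_{2k+1} (i.e., x = x_{2j} v_j x_{2j+1} for 0 ≤ j ≤ k and x = x_{2j−1} u_j x_{2j} for 1 ≤ j ≤ k). Let h be any solution to Ψ, and let L = |u_1| + ⋯ + |u_k| + |v_0| + ⋯ + |v_k|. Then for any two indices i, j ∈ {0, 2, …, 2k} (both even), ||h(x_i)| − |h(x_j)|| ≤ L, and likewise for any two indices i, j ∈ {1, 3, …, 2k+1} (both odd), ||h(x_i)| − |h(x_j)|| ≤ L. -/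
/-!
Reading the equations of `Ψ` in the order `x₀ v₀ x₁, x₁ u₁ x₂, x₂ v₁ x₃, …` gives a chain
`X = g i ++ w i ++ g (i + 1)` for `i < 2k + 1`. Two consecutive links share the word `g (i + 1)`,
so `|g (i + 2)| - |g i| = |w i| - |w (i + 1)|`, which is at most `|w i| + |w (i + 1)|` in absolute
value. Telescoping in steps of two bounds the difference of any two lengths of equal parity by the
sum of all `|w i|`, which is `L`.
-/

open Finset

section LengthChain

variable {c w : ℕ → ℤ} {n : ℤ} {m : ℕ}

theorem abs_sub_le_add_of_add_add_eq (hw : ∀ i, 0 ≤ w i) {i : ℕ}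
    (h₀ : c i + w i + c (i + 1) = n) (h₁ : c (i + 1) + w (i + 1) + c (i + 2) = n) :
    |c (i + 2) - c i| ≤ w i + w (i + 1) := by
  have := hw i
  have := hw (i + 1)
  rw [abs_sub_le_iff]
  constructor <;> linarith

theorem abs_sub_le_sum_Ico_of_chain (hw : ∀ i, 0 ≤ w i)
    (h : ∀ i < m, c i + w i + c (i + 1) = n) (i : ℕ) :
    ∀ d, i + 2 * d ≤ m → |c (i + 2 * d) - c i| ≤ ∑ l ∈ Ico i (i + 2 * d), w l
  | 0, _ => by simp
  | d + 1, hd => by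
    have step := abs_sub_le_add_of_add_add_eq hw (h (i + 2 * d) (by omega))
      (h (i + 2 * d + 1) (by omega))
    have ih := abs_sub_le_sum_Ico_of_chain hw h i d (by omega)
    rw [show i + 2 * (d + 1) = i + 2 * d + 1 + 1 by ring,
      sum_Ico_succ_top (by omega), sum_Ico_succ_top (by omega)]
    calc |c (i + 2 * d + 1 + 1) - c i|
        ≤ |c (i + 2 * d + 2) - c (i + 2 * d)| + |c (i + 2 * d) - c i| := abs_sub_le _ _ _
      _ ≤ _ := by linarith

theorem abs_sub_le_sum_range_of_chain (hw : ∀ i, 0 ≤ w i)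
    (h : ∀ i < m, c i + w i + c (i + 1) = n) {i j : ℕ} (hi : i ≤ m) (hj : j ≤ m)
    (hij : i % 2 = j % 2) : |c i - c j| ≤ ∑ l ∈ range m, w l := by
  wlog hle : j ≤ i generalizing i j
  · rw [abs_sub_comm]
    exact this hj hi hij.symm (by omega)
  obtain ⟨d, rfl⟩ : ∃ d, i = j + 2 * d := ⟨(i - j) / 2, by omega⟩
  calc |c (j + 2 * d) - c j| ≤ ∑ l ∈ Ico j (j + 2 * d), w l :=
        abs_sub_le_sum_Ico_of_chain hw h j d hi
    _ ≤ ∑ l ∈ range m, w l :=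
        sum_le_sum_of_subset_of_nonneg
          (fun l hl => by simp only [mem_Ico, mem_range] at hl ⊢; omega) (fun l _ _ => hw l)

end LengthChain

section Separator

variable {S : Type} (u v : ℕ → List S)

/-- The constant word between `x_i` and `x_{i+1}` in the equations of `Ψ`. -/
def separator (i : ℕ) : List S :=
  if i % 2 = 0 then v (i / 2) else u (i / 2 + 1)

@[simp]
theorem separator_two_mul (j : ℕ) : separator u v (2 * j) = v j := by
  simp [separator]

@[simp]
theorem separator_two_mul_add_one (j : ℕ) : separator u v (2 * j + 1) = u (j + 1) := by
  simp [separator, Nat.add_mod, Nat.add_div]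

theorem sum_range_separator_length (k : ℕ) :
    ∑ l ∈ range (2 * k + 1), ((separator u v l).length : ℤ) =
      ∑ l ∈ Icc 1 k, ((u l).length : ℤ) + ∑ l ∈ range (k + 1), ((v l).length : ℤ) := by
  induction k with
  | zero => simp [separator]
  | succ k ih =>
    rw [show 2 * (k + 1) + 1 = 2 * k + 1 + 1 + 1 by ring, sum_range_succ, sum_range_succ, ih,
      sum_Icc_succ_top (by omega), sum_range_succ _ (k + 1),
      show 2 * k + 1 + 1 = 2 * (k + 1) by ring, separator_two_mul, separator_two_mul_add_one]
    ring

theorem eq_append_separator_append {k : ℕ} {X : List S} {g : ℕ → List S}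
    (hΨv : ∀ j, j ≤ k → X = g (2 * j) ++ v j ++ g (2 * j + 1))
    (hΨu : ∀ j, 1 ≤ j → j ≤ k → X = g (2 * j - 1) ++ u j ++ g (2 * j))
    (i : ℕ) (hi : i < 2 * k + 1) : X = g i ++ separator u v i ++ g (i + 1) := by
  obtain ⟨j, rfl | rfl⟩ := Nat.even_or_odd' i
  · rw [separator_two_mul]
    exact hΨv j (by omega)
  · rw [separator_two_mul_add_one, show 2 * j + 1 + 1 = 2 * (j + 1) by ring]
    exact hΨu (j + 1) (by omega) (by omega)

end Separator

theorem stmt13 (S : Type) (k : ℕ) (u v : ℕ → List S) (X : List S) (g : ℕ → List S)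
    (hΨv : ∀ j, j ≤ k → X = g (2 * j) ++ v j ++ g (2 * j + 1))
    (hΨu : ∀ j, 1 ≤ j → j ≤ k → X = g (2 * j - 1) ++ u j ++ g (2 * j)) :
    (∀ i j, i ≤ 2 * k → j ≤ 2 * k → i % 2 = 0 → j % 2 = 0 →
      |((g i).length : ℤ) - ((g j).length : ℤ)| ≤
        (∑ l ∈ Finset.Icc 1 k, (u l).length : ℤ) +
          (∑ l ∈ Finset.range (k + 1), (v l).length : ℤ)) ∧
    (∀ i j, 1 ≤ i → i ≤ 2 * k + 1 → 1 ≤ j → j ≤ 2 * k + 1 → i % 2 = 1 → j % 2 = 1 →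
      |((g i).length : ℤ) - ((g j).length : ℤ)| ≤
        (∑ l ∈ Finset.Icc 1 k, (u l).length : ℤ) +
          (∑ l ∈ Finset.range (k + 1), (v l).length : ℤ)) := by
  have chain : ∀ i < 2 * k + 1, ((g i).length : ℤ) + (separator u v i).length +
      (g (i + 1)).length = X.length := fun i hi => by
    rw [eq_append_separator_append u v hΨv hΨu i hi]
    simp only [List.length_append, Nat.cast_add]
  have bound {i j : ℕ} (hi : i ≤ 2 * k + 1) (hj : j ≤ 2 * k + 1) (hij : i % 2 = j % 2) :=
    sum_range_separator_length u v k ▸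
      abs_sub_le_sum_range_of_chain (fun _ => Int.natCast_nonneg _) chain hi hj hij
  constructor
  · intro i j hi hj hi2 hj2
    exact bound (by omega) (by omega) (by omega)
  · intro i j _ hi _ hj hi2 hj2
    exact bound hi hj (by omega)
end
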